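/- arXiv:1505.02058 — 2 statements merged into one kernel-verified Lean document; each statement's English description precedes it below -/
import Mathlib

section
/- Let (W,S) be a Coxeter system with geometric representation on (V,B). If α and β are two roots lying in the inversion set N(w) of some element w ∈ W, then B(α,β) > -1. -/
open scoped Classical

noncomputable section

namespace CoxGar

variable {I : Type*} {W : Type*} [Group W] {M : CoxeterMatrix I}
variable {V : Type*} [AddCommGroup V] [Module ℝ V]

/-- The conic (nonnegative) hull of a set of vectors. -/
def posSpan (A : Set V) : Set V :=
  {v | ∃ (s : Finset V) (c : V → ℝ), ↑s ⊆ A ∧ (∀ x ∈ s, 0 ≤ c x) ∧ v = ∑ x ∈ s, c x • x}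

/-- `l` is a reduced word. -/
def IsRed (cs : CoxeterSystem M W) (l : List I) : Prop :=
  cs.length (cs.wordProd l) = l.length

/-- Right weak order: `u` is a prefix of `v`, i.e. some reduced word for `u` is a prefix of
some reduced word for `v`. -/
def leR (cs : CoxeterSystem M W) (u v : W) : Prop :=
  ∃ l₁ l₂ : List I, IsRed cs (l₁ ++ l₂) ∧ cs.wordProd (l₁ ++ l₂) = v ∧ cs.wordProd l₁ = u

/-- `u` is a suffix of `v`: some reduced word for `u` is a suffix of some reduced word for `v`. -/
def IsSuffixOf (cs : CoxeterSystem M W) (u v : W) : Prop :=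
  ∃ l₁ l₂ : List I, IsRed cs (l₁ ++ l₂) ∧ cs.wordProd (l₁ ++ l₂) = v ∧ cs.wordProd l₂ = u

/-- `j` is the join (least upper bound) of `X` in right weak order. -/
def IsJoin (cs : CoxeterSystem M W) (X : Set W) (j : W) : Prop :=
  (∀ x ∈ X, leR cs x j) ∧ ∀ g, (∀ x ∈ X, leR cs x g) → leR cs j g

/-- A Garside shadow in the Coxeter system `(W,S)`: a subset of `W` containing all simple
reflections, closed under existing joins in right weak order and under taking suffixes. -/
structure IsGarsideShadow (cs : CoxeterSystem M W) (A : Set W) : Prop where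
  simple_mem : ∀ i : I, cs.simple i ∈ A
  join_mem : ∀ X ⊆ A, ∀ j : W, IsJoin cs X j → j ∈ A
  suffix_mem : ∀ w ∈ A, ∀ u : W, IsSuffixOf cs u w → u ∈ A

/-- Word length with respect to an arbitrary generating set of a group. -/
def genLen (Sgen : Set W) (w : W) : ℕ :=
  sInf {n | ∃ l : List W, l.length = n ∧ (∀ x ∈ l, x ∈ Sgen) ∧ l.prod = w}

/-- A geometric representation of the Coxeter system `cs` on the quadratic space `(V,B)`:
a faithful representation sending the simple reflections to the `B`-reflections in a
simple system `α` (positively independent unit roots with the prescribed pairings). -/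
structure GeomRep (cs : CoxeterSystem M W) (V : Type*) [AddCommGroup V] [Module ℝ V] where
  B : V →ₗ[ℝ] V →ₗ[ℝ] ℝ
  symm : ∀ u v : V, B u v = B v u
  α : I → V
  norm_one : ∀ i, B (α i) (α i) = 1
  pairing_finite : ∀ i j, M i j ≠ 0 → B (α i) (α j) = - Real.cos (Real.pi / (M i j : ℝ))
  pairing_infinite : ∀ i j, M i j = 0 → B (α i) (α j) ≤ -1
  posIndep : ∀ f : I →₀ ℝ, (∀ i, 0 ≤ f i) → (f.sum fun i c => c • α i) = 0 → f = 0
  ρ : Representation ℝ W V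
  faithful : Function.Injective ρ
  ρ_simple : ∀ (i : I) (v : V), ρ (cs.simple i) v = v - (2 * B (α i) v) • α i
  ρ_isom : ∀ (w : W) (u v : V), B (ρ w u) (ρ w v) = B u v

namespace GeomRep

variable {cs : CoxeterSystem M W} (gr : GeomRep cs V)

/-- The root system `Φ`: the orbit of the simple roots. -/
def roots : Set V := {v | ∃ (w : W) (i : I), v = gr.ρ w (gr.α i)}

/-- The positive roots `Φ⁺`. -/
def posRoots : Set V := gr.roots ∩ posSpan (Set.range gr.α)

/-- The left inversion set `N(w) = Φ⁺ ∩ w(Φ⁻)`. -/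
def invSet (w : W) : Set V := {v | v ∈ gr.posRoots ∧ gr.ρ w⁻¹ v ∈ -gr.posRoots}

/-- The reflection `s_β ∈ W` associated to a root `β` (the element of `W` acting on `V` as the
`B`-reflection along `β`). -/
def rfl' (b : V) : W :=
  Classical.epsilon fun t => ∀ v : V, gr.ρ t v = v - (2 * gr.B b v) • b

/-- Dominance order: `a ⪯ b` iff every inversion set containing `b` contains `a`. -/
def dominates (a b : V) : Prop := ∀ w : W, b ∈ gr.invSet w → a ∈ gr.invSet w

/-- The set of positive roots strictly dominated by `b`. -/
def domSet (b : V) : Set V := {a | a ∈ gr.posRoots ∧ gr.dominates a b ∧ a ≠ b}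

/-- The dominance depth (`∞`-depth) of a root. -/
def dpInf (b : V) : ℕ := (gr.domSet b).ncard

/-- The set `Σ_n` of `n`-small roots. -/
def smallRoots (n : ℕ) : Set V := {b | b ∈ gr.posRoots ∧ gr.dpInf b ≤ n}

/-- `w` is `n`-low: its inversion set is the set of roots in the conic hull of its
`n`-small inversion set. -/
def IsLow (n : ℕ) (w : W) : Prop :=
  gr.invSet w = posSpan (gr.invSet w ∩ gr.smallRoots n) ∩ gr.roots

/-- The set `L_n(W)` of `n`-low elements. -/
def lowSet (n : ℕ) : Set W := {w | gr.IsLow n w}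

/-- The base `N¹(w)` of the inversion set: positive roots `β` with `ℓ(s_β w) = ℓ(w) - 1`. -/
def base (w : W) : Set V :=
  {b | b ∈ gr.posRoots ∧ cs.length (gr.rfl' b * w) + 1 = cs.length w}

/-- The roots of a reflection subgroup `W'`. -/
def rootsOf (W' : Subgroup W) : Set V := {b | b ∈ gr.roots ∧ gr.rfl' b ∈ W'}

/-- The canonical simple system of a reflection subgroup `W'`. -/
def canSimples (W' : Subgroup W) : Set V :=
  {a | a ∈ gr.posRoots ∧ gr.invSet (gr.rfl' a) ∩ gr.rootsOf W' = {a}}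

/-- `{a,b}` is the canonical simple pair of a maximal dihedral reflection subgroup:
both are positive roots and the positive roots in the plane they span are exactly the
roots in their conic hull. -/
def IsMaxDihedralPair (a b : V) : Prop :=
  a ∈ gr.posRoots ∧ b ∈ gr.posRoots ∧ a ≠ b ∧
    (Submodule.span ℝ {a, b} : Set V) ∩ gr.posRoots = posSpan {a, b} ∩ gr.roots

/-- A set of positive roots is bipodal if, whenever it contains a positive non-simple root of a
maximal dihedral reflection subgroup, it contains both canonical simple roots of that subgroup. -/
def Bipodal (A : Set V) : Prop :=
  ∀ a b : V, gr.IsMaxDihedralPair a b →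
    (∃ c ∈ A, c ∈ posSpan {a, b} ∩ gr.roots ∧ c ≠ a ∧ c ≠ b) → a ∈ A ∧ b ∈ A

/-- `f_s(β)`: the root completing `α_s` to the canonical simple pair of the maximal dihedral
reflection subgroup containing `s` and `s_β`. -/
def fRoot (i : I) (b : V) : V :=
  Classical.epsilon fun c => c ∈ gr.posRoots ∧
    (Submodule.span ℝ {gr.α i, b} : Set V) ∩ gr.posRoots = posSpan {gr.α i, c} ∩ gr.roots

/-- The `X`-length of a positive root. -/
def dXpos (X : Set ℝ) (b : V) : ℕ :=
  {a | a ∈ gr.invSet (gr.rfl' b) ∧ gr.B a b ∈ X}.ncard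

/-- The `X`-length function `d_X` on the root system, with `d_X(-β) = -d_X(β)`. -/
def dX (X : Set ℝ) (b : V) : ℤ :=
  if b ∈ gr.posRoots then (gr.dXpos X b : ℤ) else -(gr.dXpos X (-b) : ℤ)

/-- Normalization of a vector to square length one. -/
def nzd (v : V) : V := (Real.sqrt (gr.B v v))⁻¹ • v

/-- A root `a` spans an extreme ray of the cone `C`. -/
def IsExtremeRayRep (C : Set V) (a : V) : Prop :=
  a ∈ C ∧ a ≠ 0 ∧ ∀ u ∈ C, ∀ v ∈ C, a ∈ posSpan {u, v} →
    (∃ c : ℝ, 0 < c ∧ u = c • a) ∨ (∃ c : ℝ, 0 < c ∧ v = c • a)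

end GeomRep

variable {cs : CoxeterSystem M W}


/-!
Suppose `c = B(α,β) ≤ -1`. The rotation `s_α s_β ∈ W` moves `α` through the roots
`U₂ₙ(-c) α + U₂ₙ₋₁(-c) β` (Chebyshev polynomials of the second kind). These are pairwise
distinct, since `Uₖ(-c)` is strictly increasing in `k` and no positive combination of positive
roots vanishes. Their coefficients are nonnegative and `w⁻¹` sends `α` and `β` to negative
roots, so it sends all of them to negative roots: they all lie in `N(w)`. But `N(w)` is finite.
Indeed, by the positivity theorem (every root is positive or negative, reduced by Humphreys'
argument to a computation in rank two) `sᵢ` permutes `Φ⁺ ∖ {αᵢ}`, whence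
`N(sᵢ w) ⊆ {αᵢ} ∪ sᵢ N(w)`.
-/

open CoxeterSystem

/-- `dihedralCoeff c (n + 1) = Uₙ(-c)`, a Chebyshev polynomial of the second kind. For unit
vectors `a, b` with `B(a,b) = c`, these are the coefficients of the roots generated from `a` and `b`
by the two reflections. -/
def dihedralCoeff (c : ℝ) : ℕ → ℝ
  | 0 => 0
  | 1 => 1
  | n + 2 => -2 * c * dihedralCoeff c (n + 1) - dihedralCoeff c n

@[simp] lemma dihedralCoeff_zero (c : ℝ) : dihedralCoeff c 0 = 0 := rfl

@[simp] lemma dihedralCoeff_one (c : ℝ) : dihedralCoeff c 1 = 1 := rfl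

lemma dihedralCoeff_add_two (c : ℝ) (n : ℕ) :
    dihedralCoeff c (n + 2) = -2 * c * dihedralCoeff c (n + 1) - dihedralCoeff c n := rfl

lemma dihedralCoeff_nonneg_and_add_one_le {c : ℝ} (hc : c ≤ -1) (n : ℕ) :
    0 ≤ dihedralCoeff c n ∧ dihedralCoeff c n + 1 ≤ dihedralCoeff c (n + 1) := by
  induction n with
  | zero => norm_num
  | succ n ih =>
    obtain ⟨h₀, h₁⟩ := ih
    refine ⟨by linarith, ?_⟩
    rw [dihedralCoeff_add_two]
    nlinarith

lemma dihedralCoeff_nonneg {c : ℝ} (hc : c ≤ -1) (n : ℕ) : 0 ≤ dihedralCoeff c n :=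
  (dihedralCoeff_nonneg_and_add_one_le hc n).1

lemma dihedralCoeff_strictMono {c : ℝ} (hc : c ≤ -1) : StrictMono (dihedralCoeff c) :=
  strictMono_nat_of_lt_succ fun n => by linarith [(dihedralCoeff_nonneg_and_add_one_le hc n).2]

lemma dihedralCoeff_neg_cos_mul_sin (θ : ℝ) :
    ∀ n : ℕ, dihedralCoeff (-Real.cos θ) n * Real.sin θ = Real.sin (n * θ)
  | 0 => by simp
  | 1 => by simp
  | n + 2 => by
    have h₁ := dihedralCoeff_neg_cos_mul_sin θ (n + 1)
    have h₀ := dihedralCoeff_neg_cos_mul_sin θ n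
    push_cast at h₁ ⊢
    rw [dihedralCoeff_add_two, sub_mul, mul_assoc, h₁, h₀,
      show ((n : ℝ) + 2) * θ = (n + 1) * θ + θ by ring,
      show (n : ℝ) * θ = (n + 1) * θ - θ by ring, Real.sin_add, Real.sin_sub]
    ring

lemma dihedralCoeff_neg_cos_pi_div_nonneg {m k : ℕ} (hm : 2 ≤ m) (hk : k ≤ m) :
    0 ≤ dihedralCoeff (-Real.cos (Real.pi / m)) k := by
  have hm' : (2 : ℝ) ≤ m := by exact_mod_cast hm
  have hsin : 0 < Real.sin (Real.pi / m) := by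
    apply Real.sin_pos_of_pos_of_lt_pi (by positivity)
    rw [div_lt_iff₀ (by positivity)]
    nlinarith [Real.pi_pos]
  have hkθ : (k : ℝ) * (Real.pi / m) ≤ Real.pi := by
    rw [mul_div_assoc', div_le_iff₀ (by positivity), mul_comm]
    gcongr
  refine nonneg_of_mul_nonneg_left ?_ hsin
  rw [dihedralCoeff_neg_cos_mul_sin]
  exact Real.sin_nonneg_of_nonneg_of_le_pi (by positivity) hkθ

lemma mem_posSpan_range_iff {α : I → V} {v : V} :
    v ∈ posSpan (Set.range α) ↔
      ∃ f : I →₀ ℝ, (∀ i, 0 ≤ f i) ∧ v = Finsupp.linearCombination ℝ α f := by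
  constructor
  · rintro ⟨s, c, hsub, hc, rfl⟩
    choose g hg using fun x : s => hsub x.2
    refine ⟨∑ x ∈ s.attach, Finsupp.single (g x) (c x), fun i => ?_, ?_⟩
    · rw [Finsupp.finsetSum_apply]
      refine Finset.sum_nonneg fun x _ => ?_
      rw [Finsupp.single_apply]
      split_ifs
      exacts [hc x x.2, le_rfl]
    · rw [map_sum, ← Finset.sum_attach s (fun x => c x • x)]
      refine Finset.sum_congr rfl fun x _ => ?_
      rw [Finsupp.linearCombination_single, hg]
  · rintro ⟨f, hf, rfl⟩
    refine ⟨f.support.image α, fun x => ∑ i ∈ f.support with α i = x, f i, ?_,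
      fun x _ => Finset.sum_nonneg fun i _ => hf i, ?_⟩
    · simp only [Finset.coe_image]
      exact Set.image_subset_range _ _
    · rw [Finsupp.linearCombination_apply, Finsupp.sum, Finset.sum_image' (fun i => f i • α i)]
      intro i _
      rw [Finset.sum_smul]
      exact Finset.sum_congr rfl fun j hj => by rw [(Finset.mem_filter.1 hj).2]

lemma simple_mul_wordProd_alternatingWord {p q x : I} (hx : x = p ∨ x = q) (m : ℕ) :
    ∃ m' ≤ m + 1, cs.simple x * cs.wordProd (alternatingWord p q m) =
        cs.wordProd (alternatingWord p q m') ∨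
      cs.simple x * cs.wordProd (alternatingWord p q m) = cs.wordProd (alternatingWord q p m') := by
  by_cases hfirst : x = if Even m then q else p
  · exact ⟨m + 1, le_rfl, Or.inl (by rw [alternatingWord_succ', cs.wordProd_cons, hfirst])⟩
  cases m with
  | zero =>
    obtain rfl : x = p := hx.resolve_right (by simpa using hfirst)
    exact ⟨1, le_rfl, Or.inr (by simp [alternatingWord])⟩
  | succ n =>
    have hx' : x = if Even n then q else p := by
      rcases Nat.even_or_odd n with hn | hn <;> simp_all [Nat.even_add_one]
    refine ⟨n, by omega, Or.inl ?_⟩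
    rw [alternatingWord_succ', cs.wordProd_cons, ← mul_assoc, ← hx', cs.simple_mul_simple_self,
      one_mul]

lemma exists_wordProd_eq_alternatingWord {i j : I} {ω : List I}
    (hω : ∀ x ∈ ω, x = i ∨ x = j) :
    ∃ m ≤ ω.length, cs.wordProd ω = cs.wordProd (alternatingWord i j m) ∨
      cs.wordProd ω = cs.wordProd (alternatingWord j i m) := by
  induction ω with
  | nil => exact ⟨0, le_rfl, Or.inl rfl⟩
  | cons x ω ih =>
    obtain ⟨m, hm, h | h⟩ := ih fun y hy => hω y (List.mem_cons_of_mem _ hy)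
    · obtain ⟨m', hm', hc⟩ := simple_mul_wordProd_alternatingWord (cs := cs) (hω x (by simp)) m
      exact ⟨m', by simp; omega, by rwa [cs.wordProd_cons, h]⟩
    · obtain ⟨m', hm', hc⟩ :=
        simple_mul_wordProd_alternatingWord (cs := cs) (hω x (by simp)).symm m
      exact ⟨m', by simp; omega, by rw [cs.wordProd_cons, h]; exact hc.symm⟩

/-- Humphreys' reduction of the positivity theorem to the rank-two subgroup `⟨sᵢ, sⱼ⟩`. -/
lemma exists_factorization_not_isRightDescent {i j : I} {w v : W} {ω : List I}
    (hω : ∀ x ∈ ω, x = i ∨ x = j) (hw : v * cs.wordProd ω = w)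
    (hlen : cs.length w = cs.length v + ω.length) :
    ∃ (v' : W) (ω' : List I), (∀ x ∈ ω', x = i ∨ x = j) ∧ v' * cs.wordProd ω' = w ∧
      cs.length w = cs.length v' + ω'.length ∧ cs.length v' ≤ cs.length v ∧
      ¬cs.IsRightDescent v' i ∧ ¬cs.IsRightDescent v' j := by
  induction hv : cs.length v using Nat.strong_induction_on generalizing v ω with
  | _ n ih =>
    by_cases hdesc : ∃ x, (x = i ∨ x = j) ∧ cs.IsRightDescent v x
    · obtain ⟨x, hx, hvx⟩ := hdesc
      have hlen' := cs.isRightDescent_iff.1 hvx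
      obtain ⟨v', ω', hω', hw', hlen'', hle, hi, hj⟩ :=
        ih _ (by omega) (v := v * cs.simple x) (ω := x :: ω)
          (fun y hy => (List.mem_cons.1 hy).elim (· ▸ hx) (hω y))
          (by rw [cs.wordProd_cons, mul_assoc, ← mul_assoc (cs.simple x),
            cs.simple_mul_simple_self, one_mul, hw])
          (by simp; omega) rfl
      exact ⟨v', ω', hω', hw', hlen'', by omega, hi, hj⟩
    · push Not at hdesc
      exact ⟨v, ω, hω, hw, hlen, hv.le, hdesc i (Or.inl rfl), hdesc j (Or.inr rfl)⟩

namespace GeomRep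

variable (gr : GeomRep cs V)

def reflect (a v : V) : V := v - (2 * gr.B a v) • a

lemma rho_mul_apply (g h : W) (v : V) : gr.ρ (g * h) v = gr.ρ g (gr.ρ h v) := by
  rw [map_mul, Module.End.mul_apply]

lemma rho_simple_self (i : I) : gr.ρ (cs.simple i) (gr.α i) = -gr.α i := by
  rw [gr.ρ_simple, gr.norm_one]
  module

lemma B_self_of_mem_roots {a : V} (ha : a ∈ gr.roots) : gr.B a a = 1 := by
  obtain ⟨w, i, rfl⟩ := ha
  rw [gr.ρ_isom, gr.norm_one]

lemma ne_zero_of_mem_roots {a : V} (ha : a ∈ gr.roots) : a ≠ 0 := by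
  rintro rfl
  simpa using gr.B_self_of_mem_roots ha

lemma rho_mem_roots (w : W) {a : V} (ha : a ∈ gr.roots) : gr.ρ w a ∈ gr.roots := by
  obtain ⟨u, i, rfl⟩ := ha
  exact ⟨w * u, i, (gr.rho_mul_apply w u _).symm⟩

lemma neg_mem_roots {a : V} (ha : a ∈ gr.roots) : -a ∈ gr.roots := by
  obtain ⟨u, i, rfl⟩ := ha
  exact ⟨u * cs.simple i, i, by rw [rho_mul_apply, rho_simple_self, map_neg]⟩

lemma rho_rfl' {a : V} (ha : a ∈ gr.roots) (v : V) : gr.ρ (gr.rfl' a) v = gr.reflect a v := by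
  obtain ⟨g, i, rfl⟩ := ha
  refine Classical.epsilon_spec (p := fun t => ∀ v, gr.ρ t v = gr.reflect _ v)
    ⟨g * cs.simple i * g⁻¹, fun v => ?_⟩ v
  rw [rho_mul_apply, rho_mul_apply, gr.ρ_simple, map_sub, map_smul, Representation.self_inv_apply,
    reflect, ← gr.ρ_isom g, Representation.self_inv_apply]

lemma reflect_smul_add_smul {a b : V} (hb : gr.B b b = 1) (p q : ℝ) :
    gr.reflect b (p • a + q • b) = p • a + (-2 * gr.B a b * p - q) • b := by
  simp only [reflect, map_add, map_smul, smul_eq_mul, hb, gr.symm b a]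
  module

lemma rho_mul_pow_apply {x y : W} {a b : V} (ha : gr.B a a = 1) (hb : gr.B b b = 1)
    (hx : ∀ v, gr.ρ x v = gr.reflect a v) (hy : ∀ v, gr.ρ y v = gr.reflect b v) (n : ℕ) :
    gr.ρ ((x * y) ^ n) a =
      dihedralCoeff (gr.B a b) (2 * n + 1) • a + dihedralCoeff (gr.B a b) (2 * n) • b := by
  induction n with
  | zero => simp
  | succ n ih =>
    rw [pow_succ', rho_mul_apply, rho_mul_apply, ih, hy, reflect_smul_add_smul _ hb, hx,
      add_comm, reflect_smul_add_smul _ ha, gr.symm b a, show 2 * (n + 1) = 2 * n + 2 by ring,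
      show 2 * n + 2 + 1 = 2 * n + 1 + 2 by ring, dihedralCoeff_add_two _ (2 * n + 1),
      dihedralCoeff_add_two]
    abel

lemma simple_mem_posSpan (i : I) : gr.α i ∈ posSpan (Set.range gr.α) :=
  mem_posSpan_range_iff.2 ⟨Finsupp.single i 1, fun j => by
    rw [Finsupp.single_apply]; split_ifs <;> norm_num, by simp⟩

lemma smul_add_smul_mem_posSpan {p q : ℝ} (hp : 0 ≤ p) (hq : 0 ≤ q) {x y : V}
    (hx : x ∈ posSpan (Set.range gr.α)) (hy : y ∈ posSpan (Set.range gr.α)) :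
    p • x + q • y ∈ posSpan (Set.range gr.α) := by
  obtain ⟨f, hf, rfl⟩ := mem_posSpan_range_iff.1 hx
  obtain ⟨g, hg, rfl⟩ := mem_posSpan_range_iff.1 hy
  refine mem_posSpan_range_iff.2 ⟨p • f + q • g, fun i => ?_, by simp⟩
  simp only [Finsupp.add_apply, Finsupp.smul_apply, smul_eq_mul]
  exact add_nonneg (mul_nonneg hp (hf i)) (mul_nonneg hq (hg i))

lemma eq_zero_of_mem_posSpan_of_neg_mem_posSpan {v : V} (hv : v ∈ posSpan (Set.range gr.α))
    (hv' : -v ∈ posSpan (Set.range gr.α)) : v = 0 := by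
  obtain ⟨f, hf, rfl⟩ := mem_posSpan_range_iff.1 hv
  obtain ⟨g, hg, hfg⟩ := mem_posSpan_range_iff.1 hv'
  have hzero : f + g = 0 := gr.posIndep _ (fun i => add_nonneg (hf i) (hg i)) <| by
    rw [← Finsupp.linearCombination_apply, map_add, ← hfg, add_neg_cancel]
  have hf0 : f = 0 := by
    ext i
    have := DFunLike.congr_fun hzero i
    simp only [Finsupp.add_apply, Finsupp.coe_zero, Pi.zero_apply] at this ⊢
    linarith [hf i, hg i]
  rw [hf0, map_zero]

lemma smul_add_smul_ne_zero {a b : V} (ha : a ∈ posSpan (Set.range gr.α)) (ha₀ : a ≠ 0)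
    (hb : b ∈ posSpan (Set.range gr.α)) {p q : ℝ} (hp : 0 < p) (hq : 0 ≤ q) :
    p • a + q • b ≠ 0 := by
  intro h
  have hpa : -(p • a) ∈ posSpan (Set.range gr.α) := by
    rw [neg_eq_of_add_eq_zero_right h, ← zero_add (q • b), ← zero_smul ℝ a]
    exact gr.smul_add_smul_mem_posSpan le_rfl hq ha hb
  have := gr.eq_zero_of_mem_posSpan_of_neg_mem_posSpan
    (by simpa using gr.smul_add_smul_mem_posSpan hp.le le_rfl ha ha) hpa
  exact ha₀ ((smul_eq_zero.1 this).resolve_left hp.ne')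

lemma dihedralCoeff_pairing_nonneg {i j : I} (hij : i ≠ j) {k : ℕ} (hk : M i j = 0 ∨ k ≤ M i j) :
    0 ≤ dihedralCoeff (gr.B (gr.α i) (gr.α j)) k := by
  rcases eq_or_ne (M i j) 0 with h₀ | h₀
  · exact dihedralCoeff_nonneg (gr.pairing_infinite i j h₀) k
  · have h₂ : 2 ≤ M i j := by have := M.off_diagonal i j hij; omega
    rw [gr.pairing_finite i j h₀]
    exact dihedralCoeff_neg_cos_pi_div_nonneg h₂ (hk.resolve_left h₀)

lemma pairing_simple_nonpos {i j : I} (hij : i ≠ j) : gr.B (gr.α i) (gr.α j) ≤ 0 := by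
  have h : 0 ≤ -2 * gr.B (gr.α i) (gr.α j) * 1 - 0 :=
    gr.dihedralCoeff_pairing_nonneg hij (k := 2) <| by
      rcases eq_or_ne (M i j) 0 with h₀ | h₀
      · exact Or.inl h₀
      · have := M.off_diagonal i j hij; omega
  linarith

/-- The terms other than `αᵢ` add up to `(t - f i) • αᵢ`; pairing with `αᵢ` shows `t - f i ≤ 0`,
and then positive independence forces them to vanish. -/
lemma apply_eq_zero_of_linearCombination_eq_smul {f : I →₀ ℝ} (hf : ∀ k, 0 ≤ f k) {i : I}
    {t : ℝ} (hft : Finsupp.linearCombination ℝ gr.α f = t • gr.α i) {j : I} (hji : j ≠ i) :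
    f j = 0 := by
  have hf' : Finsupp.linearCombination ℝ gr.α (f.erase i) = (t - f i) • gr.α i := by
    have := congrArg (Finsupp.linearCombination ℝ gr.α) (Finsupp.single_add_erase i f)
    rw [map_add, Finsupp.linearCombination_single, hft] at this
    rw [sub_smul, ← this, add_sub_cancel_left]
  have hf'nonneg : ∀ k, 0 ≤ f.erase i k := fun k => by
    rw [Finsupp.erase_apply]; split_ifs; exacts [le_rfl, hf k]
  have hle : t - f i ≤ 0 := by
    have hB : gr.B (gr.α i) (Finsupp.linearCombination ℝ gr.α (f.erase i)) ≤ 0 := by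
      rw [Finsupp.linearCombination_apply, Finsupp.sum, map_sum]
      refine Finset.sum_nonpos fun k hk => ?_
      have hki : k ≠ i := by rintro rfl; simp at hk
      rw [map_smul, smul_eq_mul]
      exact mul_nonpos_of_nonneg_of_nonpos (hf'nonneg k) (gr.pairing_simple_nonpos hki.symm)
    rwa [hf', map_smul, gr.norm_one, smul_eq_mul, mul_one] at hB
  have hzero : f.erase i + Finsupp.single i (f i - t) = 0 := by
    refine gr.posIndep _ (fun k => add_nonneg (hf'nonneg k) ?_) ?_
    · rw [Finsupp.single_apply]; split_ifs <;> linarith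
    · rw [← Finsupp.linearCombination_apply, map_add, hf', Finsupp.linearCombination_single,
        ← add_smul, sub_add_sub_cancel', sub_self, zero_smul]
  have := DFunLike.congr_fun hzero j
  rwa [Finsupp.add_apply, Finsupp.erase_ne hji, Finsupp.single_eq_of_ne hji, add_zero] at this

lemma eq_simple_of_neg_rho_simple_mem_posSpan {i : I} {v : V} (hv : v ∈ gr.posRoots)
    (hv' : -gr.ρ (cs.simple i) v ∈ posSpan (Set.range gr.α)) : v = gr.α i := by
  obtain ⟨f, hf, hfv⟩ := mem_posSpan_range_iff.1 hv.2
  obtain ⟨g, hg, hgv⟩ := mem_posSpan_range_iff.1 hv'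
  have hfg : Finsupp.linearCombination ℝ gr.α (f + g) = (2 * gr.B (gr.α i) v) • gr.α i := by
    rw [map_add, ← hfv, ← hgv, gr.ρ_simple]
    abel
  have hf_single : f = Finsupp.single i (f i) := by
    ext j
    rcases eq_or_ne j i with rfl | hji
    · simp
    · have := gr.apply_eq_zero_of_linearCombination_eq_smul
        (fun k => add_nonneg (hf k) (hg k)) hfg hji
      rw [Finsupp.add_apply] at this
      rw [Finsupp.single_eq_of_ne hji]
      linarith [hf j, hg j]
  have hvi : v = f i • gr.α i := by
    rw [hfv, hf_single, Finsupp.linearCombination_single, Finsupp.single_eq_same]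
  have hfi : f i = 1 := by
    have := gr.B_self_of_mem_roots hv.1
    simp only [hvi, map_smul, LinearMap.smul_apply, gr.norm_one, smul_eq_mul, mul_one] at this
    nlinarith [hf i]
  rw [hvi, hfi, one_smul]

lemma exists_rho_alternatingWord_simple_eq {i j : I} (hij : i ≠ j) {m : ℕ}
    (hred : cs.IsReduced (alternatingWord j i (m + 1))) :
    ∃ p q : ℝ, 0 ≤ p ∧ 0 ≤ q ∧
      gr.ρ (cs.wordProd (alternatingWord i j m)) (gr.α i) = p • gr.α i + q • gr.α j := by
  have hM : M i j = 0 ∨ m + 1 ≤ M i j := by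
    by_contra! h
    rw [M.symmetric] at h
    exact cs.not_isReduced_alternatingWord j i h.1 h.2 hred
  have hc : ∀ k ≤ m + 1, 0 ≤ dihedralCoeff (gr.B (gr.α i) (gr.α j)) k := fun k hk =>
    gr.dihedralCoeff_pairing_nonneg hij (hM.imp_right hk.trans)
  have hpow := gr.rho_mul_pow_apply (gr.norm_one i) (gr.norm_one j) (gr.ρ_simple i) (gr.ρ_simple j)
  rw [cs.prod_alternatingWord_eq_mul_pow]
  obtain ⟨n, rfl | rfl⟩ := Nat.even_or_odd' m
  · rw [if_pos (even_two_mul n), one_mul, Nat.mul_div_cancel_left n two_pos, hpow]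
    exact ⟨_, _, hc _ (by omega), hc _ (by omega), rfl⟩
  · rw [if_neg (Nat.not_even_two_mul_add_one n), Nat.mul_add_div two_pos,
      Nat.div_eq_of_lt one_lt_two, add_zero, rho_mul_apply, hpow, gr.ρ_simple, ← reflect,
      reflect_smul_add_smul _ (gr.norm_one j), ← dihedralCoeff_add_two]
    exact ⟨_, _, hc _ (by omega), hc _ (by omega), rfl⟩

lemma exists_rho_wordProd_simple_eq {i j : I} (hij : i ≠ j) {ω : List I}
    (hω : ∀ x ∈ ω, x = i ∨ x = j) (hlen : ω.length < cs.length (cs.wordProd ω * cs.simple i)) :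
    ∃ p q : ℝ, 0 ≤ p ∧ 0 ≤ q ∧ gr.ρ (cs.wordProd ω) (gr.α i) = p • gr.α i + q • gr.α j := by
  obtain ⟨m, hm, h | h⟩ := exists_wordProd_eq_alternatingWord (cs := cs) hω
  · rw [h] at hlen ⊢
    refine gr.exists_rho_alternatingWord_simple_eq hij (le_antisymm (cs.length_wordProd_le _) ?_)
    rw [alternatingWord_succ, cs.wordProd_concat, List.length_concat, length_alternatingWord]
    omega
  · rcases m with _ | m
    · exact ⟨1, 0, zero_le_one, le_rfl, by simp [h, alternatingWord]⟩
    · rw [h, alternatingWord_succ, cs.wordProd_concat, mul_assoc, cs.simple_mul_simple_self,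
        mul_one] at hlen
      have := cs.length_wordProd_le (alternatingWord i j m)
      rw [length_alternatingWord] at this
      omega

theorem rho_simple_mem_posSpan_of_not_isRightDescent {w : W} {i : I}
    (h : ¬cs.IsRightDescent w i) : gr.ρ w (gr.α i) ∈ posSpan (Set.range gr.α) := by
  induction hn : cs.length w using Nat.strong_induction_on generalizing w i with
  | _ n ih =>
    rcases eq_or_ne w 1 with rfl | hw
    · simpa using gr.simple_mem_posSpan i
    obtain ⟨j, hj⟩ := cs.exists_rightDescent_of_ne_one hw
    have hij : i ≠ j := by rintro rfl; exact h hj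
    obtain ⟨v, ω, hω, rfl, hlen, hv, hvi, hvj⟩ :=
      exists_factorization_not_isRightDescent (cs := cs) (i := i) (j := j) (w := w)
        (v := w * cs.simple j) (ω := [j]) (by simp)
        (by simp [mul_assoc]) (by simp [← cs.isRightDescent_iff.1 hj])
    have hωi : ω.length < cs.length (cs.wordProd ω * cs.simple i) := by
      have := cs.length_mul_le v (cs.wordProd ω * cs.simple i)
      rw [← mul_assoc, cs.not_isRightDescent_iff.1 h] at this
      omega
    have hvn : cs.length v < n := by have := cs.isRightDescent_iff.1 hj; omega
    obtain ⟨p, q, hp, hq, hpq⟩ := gr.exists_rho_wordProd_simple_eq hij hω hωi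
    rw [rho_mul_apply, hpq, map_add, map_smul, map_smul]
    exact gr.smul_add_smul_mem_posSpan hp hq (ih _ hvn hvi rfl) (ih _ hvn hvj rfl)

lemma mem_posSpan_or_neg_mem_posSpan {v : V} (hv : v ∈ gr.roots) :
    v ∈ posSpan (Set.range gr.α) ∨ -v ∈ posSpan (Set.range gr.α) := by
  obtain ⟨w, i, rfl⟩ := hv
  by_cases h : cs.IsRightDescent w i
  · right
    rw [← map_neg, ← rho_simple_self, ← rho_mul_apply]
    exact gr.rho_simple_mem_posSpan_of_not_isRightDescent
      (cs.isRightDescent_iff_not_isRightDescent_mul.1 h)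
  · exact Or.inl (gr.rho_simple_mem_posSpan_of_not_isRightDescent h)

lemma rho_simple_mem_posRoots {i : I} {v : V} (hv : v ∈ gr.posRoots) (hne : v ≠ gr.α i) :
    gr.ρ (cs.simple i) v ∈ gr.posRoots := by
  have hroot := gr.rho_mem_roots (cs.simple i) hv.1
  refine ⟨hroot, (gr.mem_posSpan_or_neg_mem_posSpan hroot).resolve_right fun hneg => ?_⟩
  exact hne (gr.eq_simple_of_neg_rho_simple_mem_posSpan hv hneg)

lemma invSet_one : gr.invSet 1 = ∅ := by
  refine Set.eq_empty_of_forall_notMem fun v ⟨hv, hv'⟩ => gr.ne_zero_of_mem_roots hv.1 ?_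
  rw [inv_one, map_one, Module.End.one_apply] at hv'
  exact gr.eq_zero_of_mem_posSpan_of_neg_mem_posSpan hv.2 hv'.2

lemma invSet_simple_mul_subset (i : I) (w : W) :
    gr.invSet (cs.simple i * w) ⊆ insert (gr.α i) (gr.ρ (cs.simple i) '' gr.invSet w) := by
  intro v ⟨hv, hv'⟩
  refine or_iff_not_imp_left.2 fun hne => ⟨gr.ρ (cs.simple i) v,
    ⟨gr.rho_simple_mem_posRoots hv hne, ?_⟩, ?_⟩
  · rwa [← rho_mul_apply, ← cs.inv_simple, ← mul_inv_rev]
  · rw [← rho_mul_apply, cs.simple_mul_simple_self, map_one, Module.End.one_apply]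

lemma invSet_finite (w : W) : (gr.invSet w).Finite :=
  cs.simple_induction_left (p := fun w => (gr.invSet w).Finite) w (by simp [invSet_one])
    fun w i hw => ((hw.image _).insert _).subset (gr.invSet_simple_mul_subset i w)

lemma smul_add_smul_mem_invSet {w : W} {a b : V} (ha : a ∈ gr.invSet w) (hb : b ∈ gr.invSet w)
    {p q : ℝ} (hp : 0 ≤ p) (hq : 0 ≤ q) (hr : p • a + q • b ∈ gr.roots) :
    p • a + q • b ∈ gr.invSet w := by
  refine ⟨⟨hr, gr.smul_add_smul_mem_posSpan hp hq ha.1.2 hb.1.2⟩,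
    gr.neg_mem_roots (gr.rho_mem_roots _ hr), ?_⟩
  rw [map_add, map_smul, map_smul, neg_add, ← smul_neg, ← smul_neg]
  exact gr.smul_add_smul_mem_posSpan hp hq ha.2.2 hb.2.2

end GeomRep

/-- If `α, β ∈ N(w)` then `B(α,β) > -1`. -/
theorem neg_one_lt_pairing_of_mem_invSet (gr : GeomRep cs V) (w : W) {a b : V}
    (ha : a ∈ gr.invSet w) (hb : b ∈ gr.invSet w) :
    -1 < gr.B a b := by
  by_contra! hab
  set r : ℕ → V := fun n => gr.ρ ((gr.rfl' a * gr.rfl' b) ^ n) a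
  have hr : ∀ n, r n = dihedralCoeff (gr.B a b) (2 * n + 1) • a +
      dihedralCoeff (gr.B a b) (2 * n) • b :=
    gr.rho_mul_pow_apply (gr.B_self_of_mem_roots ha.1.1) (gr.B_self_of_mem_roots hb.1.1)
      (gr.rho_rfl' ha.1.1) (gr.rho_rfl' hb.1.1)
  have hmem : ∀ n, r n ∈ gr.invSet w := fun n => by
    rw [hr]
    exact gr.smul_add_smul_mem_invSet ha hb (dihedralCoeff_nonneg hab _)
      (dihedralCoeff_nonneg hab _) (hr n ▸ gr.rho_mem_roots _ ha.1.1)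
  have hinj : Function.Injective r := .of_lt_imp_ne fun m n hmn hrmn => by
    have hmono := dihedralCoeff_strictMono hab
    refine gr.smul_add_smul_ne_zero ha.1.2 (gr.ne_zero_of_mem_roots ha.1.1) hb.1.2
      (sub_pos.2 (hmono (by omega : 2 * m + 1 < 2 * n + 1)))
      (sub_nonneg.2 (hmono (by omega : 2 * m < 2 * n)).le) ?_
    rw [sub_smul, sub_smul, ← add_sub_add_comm, ← hr, ← hr, hrmn, sub_self]
  exact Set.infinite_range_of_injective hinj
    ((gr.invSet_finite w).subset (Set.range_subset_iff.2 hmem))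

end CoxGar
end
end

section
/- Let x, y be elements of a Coxeter group W such that the join x ∨ y in right weak order exists, and let β ∈ Φ⁺ with ℓ(s_β (x∨y)) = ℓ(x∨y) − 1. Then ℓ(s_β x) = ℓ(x) − 1 or ℓ(s_β y) = ℓ(y) − 1. -/
open scoped Classical

noncomputable section

namespace CoxGar

variable {I : Type*} {W : Type*} [Group W] {M : CoxeterMatrix I}
variable {V : Type*} [AddCommGroup V] [Module ℝ V]

variable {cs : CoxeterSystem M W}

/-!
Put `t = s_β` and write `j = x * u` with `ℓ j = ℓ x + ℓ u`. By the strong exchange condition, `t * j`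
is obtained from a reduced word for `j` through `x` by deleting one letter. If that letter lies in
the word for `x`, then `ℓ (t * x) = ℓ x - 1`; otherwise `t * j = x * u'` with `ℓ (t * j) = ℓ x + ℓ u'`,
so `x ≤_R t * j`. If the second case happened for both `x` and `y`, then `j = x ∨ y ≤_R t * j`,
which is impossible since `ℓ (t * j) < ℓ j`.

The strong exchange condition comes from Tits' reflection cocycle: `W` acts on `W × ZMod 2`,
the generator `s` sending `(q, ε)` to `(s q s, ε + [q = s])`, so the parity of the number of
occurrences of `t` in the right inversion sequence of a word depends only on its product `w`;
this parity is odd exactly when `ℓ (w * t) < ℓ w`.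
-/

open List CoxeterSystem

local prefix:100 "s" => cs.simple
local prefix:100 "π" => cs.wordProd
local prefix:100 "ℓ" => cs.length
local prefix:100 "ris" => cs.rightInvSeq
local prefix:100 "lis" => cs.leftInvSeq

section ReflectionCocycle

variable (cs)

theorem prod_map_alternatingWord_two_mul {G : Type*} [Monoid G] (f : I → G) (i i' : I)
    (k : ℕ) :
    ((alternatingWord i i' (2 * k)).map f).prod = (f i * f i') ^ k := by
  induction k with
  | zero => simp [alternatingWord]
  | succ k ih =>
    rw [show 2 * (k + 1) = 2 * k + 1 + 1 by ring, alternatingWord_succ', alternatingWord_succ']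
    simp [ih, pow_succ', mul_assoc]

theorem reverse_alternatingWord_two_mul (i i' : I) (k : ℕ) :
    (alternatingWord i i' (2 * k)).reverse = alternatingWord i' i (2 * k) := by
  refine List.ext_getElem (by simp) fun n h₁ h₂ => ?_
  simp only [length_reverse, length_alternatingWord] at h₁
  rw [getElem_reverse, getElem_alternatingWord _ _ _ _ (by simp; omega),
    getElem_alternatingWord _ _ _ _ h₁]
  simp only [length_alternatingWord]
  have : Even (2 * k + (2 * k - 1 - n)) ↔ ¬Even (2 * k + n) := by
    set m := 2 * k - 1 - n
    have hm : n + m + 1 = 2 * k := by omega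
    have hodd : ¬Even (n + m) := by
      rw [← Nat.even_add_one, hm]
      exact even_two_mul k
    simp only [Nat.even_add, even_two_mul, true_iff] at hodd ⊢
    tauto
  split_ifs <;> tauto

theorem leftInvSeq_alternatingWord_two_mul (i i' : I) (k : ℕ) :
    lis (alternatingWord i i' (2 * k)) =
      (range (2 * k)).map fun n => s i * (s i' * s i) ^ n := by
  refine List.ext_getElem (by simp) fun n h₁ h₂ => ?_
  simp only [length_leftInvSeq, length_alternatingWord] at h₁
  rw [getElem_leftInvSeq_alternatingWord cs i i' k n h₁, prod_alternatingWord_eq_mul_pow]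
  simp [show (2 * n + 1) / 2 = n by omega]

theorem even_count_rightInvSeq_alternatingWord (i i' : I) (q : W) :
    Even ((ris (alternatingWord i i' (2 * M i i'))).count q) := by
  set m := M i i'
  rw [← reverse_alternatingWord_two_mul, rightInvSeq_reverse, count_reverse,
    leftInvSeq_alternatingWord_two_mul, two_mul, range_add, map_append, map_map]
  have hperiod :
      ((fun n => s i' * (s i * s i') ^ n) ∘ (m + ·)) = fun n => s i' * (s i * s i') ^ n := by
    ext n
    simp [pow_add, m, cs.simple_mul_simple_pow]
  rw [hperiod, count_append]
  exact ⟨_, rfl⟩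

def cocycleStepFun (i : I) (p : W × ZMod 2) : W × ZMod 2 :=
  (s i * p.1 * s i, p.2 + if p.1 = s i then 1 else 0)

theorem cocycleStepFun_involutive (i : I) : Function.Involutive (cocycleStepFun cs i) := by
  rintro ⟨q, d⟩
  by_cases hq : q = s i
  · subst hq
    simp [cocycleStepFun, add_assoc, CharTwo.add_self_eq_zero]
  · simp [cocycleStepFun, hq, mul_assoc, mul_eq_one_iff_eq_inv]

def cocycleStep (i : I) : Equiv.Perm (W × ZMod 2) := (cocycleStepFun_involutive cs i).toPerm

theorem prod_map_cocycleStep_apply (ω : List I) (q : W) (d : ZMod 2) :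
    (ω.map (cocycleStep cs)).prod (q, d) =
      (π ω * q * (π ω)⁻¹, d + ((ris ω).count q : ZMod 2)) := by
  induction ω generalizing d with
  | nil => simp
  | cons i ω ih =>
    have hiff : (π ω)⁻¹ * s i * π ω = q ↔ π ω * q * (π ω)⁻¹ = s i := by
      constructor
      · rintro rfl; group
      · intro h; rw [← h]; group
    simp only [map_cons, prod_cons, Equiv.Perm.mul_apply, ih, rightInvSeq, count_cons, beq_iff_eq,
      hiff, wordProd_cons, mul_inv_rev, inv_simple]
    simp only [cocycleStep, Function.Involutive.coe_toPerm, cocycleStepFun, mul_assoc,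
      Prod.mk.injEq, true_and]
    split_ifs <;> push_cast <;> ring

theorem isLiftable_cocycleStep : M.IsLiftable (cocycleStep cs) := by
  intro i i'
  have hπ : π (alternatingWord i i' (2 * M i i')) = 1 := by
    rw [wordProd, prod_map_alternatingWord_two_mul, cs.simple_mul_simple_pow]
  ext ⟨q, d⟩ : 1
  rw [← prod_map_alternatingWord_two_mul, prod_map_cocycleStep_apply, hπ,
    (ZMod.natCast_eq_zero_iff_even).2 (even_count_rightInvSeq_alternatingWord cs i i' q)]
  simp

def reflCocycle : W →* Equiv.Perm (W × ZMod 2) :=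
  cs.lift ⟨cocycleStep cs, isLiftable_cocycleStep cs⟩

theorem reflCocycle_wordProd (ω : List I) :
    reflCocycle cs (π ω) = (ω.map (cocycleStep cs)).prod := by
  rw [wordProd, map_list_prod, map_map]
  congr 1
  exact map_congr_left fun i _ => cs.lift_apply_simple (isLiftable_cocycleStep cs) i

def reflParity (w t : W) : ZMod 2 := (reflCocycle cs w (t, 0)).2

theorem reflParity_wordProd (ω : List I) (t : W) :
    reflParity cs (π ω) t = ((ris ω).count t : ZMod 2) := by
  rw [reflParity, reflCocycle_wordProd, prod_map_cocycleStep_apply, zero_add]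

theorem reflCocycle_apply (w q : W) (d : ZMod 2) :
    reflCocycle cs w (q, d) = (w * q * w⁻¹, d + reflParity cs w q) := by
  obtain ⟨ω, rfl⟩ := cs.wordProd_surjective w
  rw [reflCocycle_wordProd, prod_map_cocycleStep_apply, reflParity_wordProd]

theorem reflParity_self {t : W} (ht : cs.IsReflection t) : reflParity cs t t = 1 := by
  obtain ⟨w, i, rfl⟩ := ht
  set t := w * s i * w⁻¹ with ht
  set a := reflParity cs w⁻¹ t
  have hw_inv : reflCocycle cs w⁻¹ (t, 0) = (s i, a) := by
    rw [reflCocycle_apply, zero_add, ht]; congr 1; group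
  have hw : reflCocycle cs w (s i, a) = (t, 0) := by
    rw [← hw_inv, ← Equiv.Perm.mul_apply, ← map_mul, mul_inv_cancel, map_one,
      Equiv.Perm.one_apply]
  have hs : reflCocycle cs (s i) (s i, a) = (s i, a + 1) := by
    rw [reflCocycle_apply, ← wordProd_singleton, reflParity_wordProd]
    simp
  rw [reflCocycle_apply] at hw
  have hsum : a + reflParity cs w (s i) = 0 := (Prod.ext_iff.1 hw).2
  calc reflParity cs t t
      = (reflCocycle cs w (reflCocycle cs (s i) (reflCocycle cs w⁻¹ (t, 0)))).2 := by
        rw [reflParity, ht, map_mul, map_mul]; rfl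
    _ = a + reflParity cs w (s i) + 1 := by rw [hw_inv, hs, reflCocycle_apply]; ring
    _ = 1 := by rw [hsum, zero_add]

theorem reflParity_mul (u v t : W) :
    reflParity cs (u * v) t = reflParity cs v t + reflParity cs u (v * t * v⁻¹) := by
  rw [reflParity, map_mul, Equiv.Perm.mul_apply, reflCocycle_apply, reflCocycle_apply, zero_add]

theorem mem_rightInvSeq_of_reflParity_eq_one {ω : List I} {t : W}
    (h : reflParity cs (π ω) t = 1) : t ∈ ris ω := by
  by_contra hmem
  rw [reflParity_wordProd, count_eq_zero_of_not_mem hmem] at h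
  exact zero_ne_one h

theorem length_mul_lt_of_reflParity_eq_one {w t : W} (h : reflParity cs w t = 1) :
    ℓ (w * t) < ℓ w := by
  obtain ⟨ω, hω, rfl⟩ := cs.exists_isReduced w
  exact (cs.isRightInversion_of_mem_rightInvSeq hω (mem_rightInvSeq_of_reflParity_eq_one cs h)).2

theorem reflParity_eq_one_of_isRightInversion {w t : W} (h : cs.IsRightInversion w t) :
    reflParity cs w t = 1 := by
  obtain ⟨ht, hlt⟩ := h
  refine ((by decide : ∀ x : ZMod 2, x = 0 ∨ x = 1) _).resolve_left fun hzero => ?_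
  have hwt : reflParity cs (w * t) t = 1 := by
    rw [reflParity_mul, reflParity_self cs ht, ht.mul_self, one_mul, ht.inv, hzero, add_zero]
  have := length_mul_lt_of_reflParity_eq_one cs hwt
  rw [mul_assoc, ht.mul_self, mul_one] at this
  exact lt_asymm hlt this

theorem exists_eraseIdx_of_isLeftInversion {ω : List I} {t : W}
    (h : cs.IsLeftInversion (π ω) t) : ∃ k < ω.length, t * π ω = π (ω.eraseIdx k) := by
  rw [← inv_inv (π ω), isLeftInversion_inv_iff, ← wordProd_reverse] at h
  have hmem := mem_rightInvSeq_of_reflParity_eq_one cs (reflParity_eq_one_of_isRightInversion cs h)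
  rw [rightInvSeq_reverse, mem_reverse] at hmem
  obtain ⟨k, hk, rfl⟩ := getElem_of_mem hmem
  refine ⟨k, by simpa using hk, ?_⟩
  rw [← getD_eq_getElem _ 1 hk, getD_leftInvSeq_mul_wordProd]

end ReflectionCocycle

theorem length_le_of_leR {u v : W} (h : leR cs u v) : ℓ u ≤ ℓ v := by
  obtain ⟨l₁, l₂, hred, rfl, rfl⟩ := h
  calc ℓ (π l₁) ≤ l₁.length := cs.length_wordProd_le l₁
    _ ≤ (l₁ ++ l₂).length := by simp
    _ = ℓ (π (l₁ ++ l₂)) := hred.symm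

theorem length_mul_add_one_eq_or_leR_mul {t x j : W} (ht : cs.IsReflection t) (hxj : leR cs x j)
    (hj : ℓ (t * j) + 1 = ℓ j) : ℓ (t * x) + 1 = ℓ x ∨ leR cs x (t * j) := by
  obtain ⟨l₁, l₂, hred, rfl, rfl⟩ := hxj
  have hlen : ℓ (π (l₁ ++ l₂)) = l₁.length + l₂.length := by rw [hred, length_append]
  have hx : ℓ (π l₁) = l₁.length := by
    simpa using (IsReduced.take (cs := cs) hred l₁.length).eq
  obtain ⟨k, hk, hexch⟩ :=
    exists_eraseIdx_of_isLeftInversion cs (ω := l₁ ++ l₂) ⟨ht, by omega⟩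
  rw [length_append] at hk
  rcases lt_or_ge k l₁.length with hk₁ | hk₁
  · left
    rw [eraseIdx_append_of_lt_length hk₁, wordProd_append, wordProd_append, ← mul_assoc,
      mul_left_inj] at hexch
    have h₁ := cs.length_wordProd_le (l₁.eraseIdx k)
    have h₂ := cs.length_mul_le (t * π l₁) (π l₂)
    have h₃ := cs.length_wordProd_le l₂
    rw [← hexch, length_eraseIdx_of_lt hk₁] at h₁
    rw [mul_assoc, ← wordProd_append] at h₂
    omega
  · right
    rw [eraseIdx_append_of_length_le hk₁] at hexch
    refine ⟨l₁, l₂.eraseIdx (k - l₁.length), ?_, hexch.symm, rfl⟩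
    rw [IsRed, ← hexch, length_append, length_eraseIdx_of_lt (by omega)]
    omega

theorem GeomRep.rfl'_ρ_α (gr : GeomRep cs V) (w : W) (i : I) :
    gr.rfl' (gr.ρ w (gr.α i)) = w * s i * w⁻¹ := by
  set b := gr.ρ w (gr.α i)
  have hconj : ∀ v, gr.ρ (w * s i * w⁻¹) v = v - (2 * gr.B b v) • b := by
    intro v
    have hB : gr.B (gr.α i) (gr.ρ w⁻¹ v) = gr.B b v := by
      rw [← gr.ρ_isom w, ← Module.End.mul_apply, ← map_mul, mul_inv_cancel, map_one,
        Module.End.one_apply]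
    simp only [map_mul, Module.End.mul_apply, gr.ρ_simple, map_sub, map_smul, hB, b]
    rw [← Module.End.mul_apply, ← map_mul, mul_inv_cancel, map_one, Module.End.one_apply]
  have hspec : ∀ v, gr.ρ (gr.rfl' b) v = v - (2 * gr.B b v) • b :=
    Classical.epsilon_spec (p := fun t => ∀ v, gr.ρ t v = v - (2 * gr.B b v) • b)
      ⟨_, hconj⟩
  exact gr.faithful (LinearMap.ext fun v => (hspec v).trans (hconj v).symm)

theorem GeomRep.isReflection_rfl' (gr : GeomRep cs V) {b : V} (hb : b ∈ gr.roots) :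
    cs.IsReflection (gr.rfl' b) := by
  obtain ⟨w, i, rfl⟩ := hb
  rw [gr.rfl'_ρ_α]
  exact (cs.isReflection_simple i).conj w

/-- If `j = x ∨ y` exists and `ℓ(s_β j) = ℓ(j) - 1` for a positive root `β`, then
`ℓ(s_β x) = ℓ(x) - 1` or `ℓ(s_β y) = ℓ(y) - 1`. -/
theorem base_of_join (gr : GeomRep cs V) (x y j : W) (hj : IsJoin cs {x, y} j)
    (b : V) (hb : b ∈ gr.posRoots)
    (h : cs.length (gr.rfl' b * j) + 1 = cs.length j) :
    cs.length (gr.rfl' b * x) + 1 = cs.length x ∨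
      cs.length (gr.rfl' b * y) + 1 = cs.length y := by
  have ht := gr.isReflection_rfl' hb.1
  rcases length_mul_add_one_eq_or_leR_mul ht (hj.1 x (by simp)) h with hx | hx
  · exact Or.inl hx
  rcases length_mul_add_one_eq_or_leR_mul ht (hj.1 y (by simp)) h with hy | hy
  · exact Or.inr hy
  have hle : leR cs j (gr.rfl' b * j) := hj.2 _ (by rintro z (rfl | rfl) <;> assumption)
  have := length_le_of_leR hle
  omega

end CoxGar
end
end
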